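/- A preference profile satisfies MaxRou if and only if (1) it satisfies MaxProp with a woman w_n who is every man's least preferred woman, and (2) every woman other than w_n is the top preference of at least one man. -/

import Mathlib

/-!
Let `u k` be the number of men proposing in round `k`. Then `u 0 = n`, `u` is non-increasing,
the total number of proposals is `∑ k < r, u k` over the `r` rounds, and `u 1` is the number of
women who are nobody's top choice. A woman still free before round `k` has not been proposed
to, so every man has made at most as many proposals as her rank in his list:
`∑ j < k, u j ≤ ∑ m, rank_m w ≤ n (n - 1)`.

If `r = n² - 2n + 2`, then `u k ≥ 1` for `k < r` makes this an equality for `k = r - 1`: every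
woman free before the last round is everyone's last choice, so there is exactly one such woman
`wn`, the total is `n (n - 1) + 1`, and `u 1 = 1`, i.e. every woman but `wn` is somebody's top
choice. Conversely, if every woman but `wn` is a top choice then `u 1 ≤ 1`, so `u k = 1` for
`0 < k < r`, and `n² - n + 1 = n + (r - 1)` proposals give `r = n² - 2n + 2`.
-/

open scoped Classical

noncomputable section

/-- A two-sided matching market with `n` men and `n` women, each with a complete
strict preference order over the other side. `mpref m k` is man `m`'s `k`-th
favourite woman (0 = top), and `wpref w k` is woman `w`'s `k`-th favourite man. -/
structure Profile (n : ℕ) where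
  mpref : Fin n → (Fin n ≃ Fin n)
  wpref : Fin n → (Fin n ≃ Fin n)

namespace Profile

variable {n : ℕ}

/-- rank (0 = best) of woman `w` in man `m`'s preference list -/
def mrank (P : Profile n) (m w : Fin n) : ℕ := ((P.mpref m).symm w : ℕ)

/-- rank (0 = best) of man `m` in woman `w`'s preference list -/
def wrank (P : Profile n) (w m : Fin n) : ℕ := ((P.wpref w).symm m : ℕ)

/-- man `m` strictly prefers woman `w` to woman `w'` -/
def mPrefers (P : Profile n) (m w w' : Fin n) : Prop := P.mrank m w < P.mrank m w'

/-- woman `w` strictly prefers man `m` to man `m'` -/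
def wPrefers (P : Profile n) (w m m' : Fin n) : Prop := P.wrank w m < P.wrank w m'

/-- top choice of man `m` -/
def topM (P : Profile n) (m : Fin n) : Fin n := P.mpref m ⟨0, m.pos⟩

/-- top choice of woman `w` -/
def topW (P : Profile n) (w : Fin n) : Fin n := P.wpref w ⟨0, w.pos⟩

/-- the profile with the roles of men and women exchanged -/
def swap (P : Profile n) : Profile n := ⟨P.wpref, P.mpref⟩

/-- State of the men-proposing deferred acceptance algorithm:
`next m` = number of proposals man `m` has made so far,
`held w` = the man woman `w` currently tentatively holds (if any). -/
structure DAState (n : ℕ) where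
  next : Fin n → ℕ
  held : Fin n → Option (Fin n)

def initState (n : ℕ) : DAState n := ⟨fun _ => 0, fun _ => none⟩

/-- the men currently unmatched (held by no woman) -/
def unmatched (s : DAState n) : Finset (Fin n) :=
  Finset.univ.filter fun m => ∀ w : Fin n, s.held w ≠ some m

/-- the woman man `m` proposes to next: his most preferred woman among those
who have not rejected him yet -/
def target (P : Profile n) (s : DAState n) (m : Fin n) : Fin n :=
  P.mpref m ⟨s.next m % n, Nat.mod_lt _ m.pos⟩

/-- the men proposing to woman `w` in the current round -/
def proposers (P : Profile n) (s : DAState n) (w : Fin n) : Finset (Fin n) :=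
  (unmatched s).filter fun m => target P s m = w

/-- one round of the men-proposing deferred acceptance algorithm: every
unmatched man proposes to his favourite woman who has not rejected him yet,
and every woman tentatively holds her favourite among her current partner
and the new proposers, rejecting the rest -/
def step (P : Profile n) (s : DAState n) : DAState n where
  next := fun m => if m ∈ unmatched s then s.next m + 1 else s.next m
  held := fun w => ((proposers P s w ∪ (s.held w).toFinset).toList).argmin (P.wrank w)

/-- the state after `k` rounds of men-proposing deferred acceptance -/
def stateAt (P : Profile n) (k : ℕ) : DAState n := (step P)^[k] (initState n)

/-- the final state of men-proposing deferred acceptance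
(`n * n + 1` iterations is always enough to reach the fixed point) -/
def finalState (P : Profile n) : DAState n := stateAt P (n * n + 1)

/-- total number of proposals made during the men-proposing DA -/
def totalProposals (P : Profile n) : ℕ := ∑ m : Fin n, (finalState P).next m

/-- number of rounds of the men-proposing DA (rounds in which some proposal is made) -/
def rounds (P : Profile n) : ℕ :=
  ((Finset.range (n * n + 1)).filter fun k => (unmatched (stateAt P k)).Nonempty).card

/-- total number of proposals received by woman `w` during the men-proposing DA -/
def proposalsTo (P : Profile n) (w : Fin n) : ℕ :=
  ∑ k ∈ Finset.range (n * n + 1), (proposers P (stateAt P k) w).card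

/-- man `m` proposes to woman `w` at some point during the men-proposing DA -/
def proposedTo (P : Profile n) (m w : Fin n) : Prop :=
  ∃ k < n * n + 1, m ∈ proposers P (stateAt P k) w

/-- the men-proposing DA makes the maximum possible number `n² - n + 1` of proposals -/
def MaxProp (P : Profile n) : Prop := P.totalProposals = n * n + 1 - n

/-- the men-proposing DA takes the maximum possible number `n² - 2n + 2` of rounds -/
def MaxRou (P : Profile n) : Prop := P.rounds = n * n + 2 - 2 * n

/-- a matching (a bijection man ↦ woman) is stable iff no man-woman pair mutually
prefer each other to their assigned partners -/
def Stable (P : Profile n) (μ : Fin n ≃ Fin n) : Prop :=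
  ¬ ∃ (m w : Fin n), P.mPrefers m w (μ m) ∧ P.wPrefers w m (μ.symm w)

/-- the profile admits a unique stable matching -/
def USM (P : Profile n) : Prop := ∃! μ : Fin n ≃ Fin n, P.Stable μ

/-- the sequential preference condition of Eeckhout (2000) -/
def SPC (P : Profile n) : Prop :=
  ∃ σ τ : Equiv.Perm (Fin n), ∀ i j : Fin n, i < j →
    P.mPrefers (σ i) (τ i) (τ j) ∧ P.wPrefers (τ i) (σ i) (σ j)

/-- the no crossing condition of Clark (2006) -/
def NCC (P : Profile n) : Prop :=
  ∃ σ τ : Equiv.Perm (Fin n), ∀ i j k l : Fin n, i < j → k < l →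
    (P.mPrefers (σ i) (τ l) (τ k) → P.mPrefers (σ j) (τ l) (τ k)) ∧
    (P.wPrefers (τ k) (σ j) (σ i) → P.wPrefers (τ l) (σ j) (σ i))

end Profile

namespace Profile

variable {n : ℕ}

def freeWomen (s : DAState n) : Finset (Fin n) := Finset.univ.filter fun w => s.held w = none

variable {P : Profile n} {s : DAState n}

lemma mem_unmatched {m : Fin n} : m ∈ unmatched s ↔ ∀ w, s.held w ≠ some m := by
  simp [unmatched]

lemma mem_freeWomen {w : Fin n} : w ∈ freeWomen s ↔ s.held w = none := by
  simp [freeWomen]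

lemma mem_proposers {m w : Fin n} :
    m ∈ proposers P s w ↔ m ∈ unmatched s ∧ target P s m = w := by
  simp [proposers]

lemma mem_of_held_step {w m : Fin n} (h : (step P s).held w = some m) :
    m ∈ proposers P s w ∨ s.held w = some m := by
  simpa [step] using List.argmin_mem h

lemma held_step_eq_none_iff {w : Fin n} :
    (step P s).held w = none ↔ proposers P s w = ∅ ∧ s.held w = none := by
  rcases h : s.held w with _ | m <;> simp [step, List.argmin_eq_none, h]

variable (P) (s) in
structure Invariant : Prop where
  held_injective : ∀ w w' m, s.held w = some m → s.held w' = some m → w = w'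
  held_ne_none_of_proposed : ∀ m w, P.mrank m w < s.next m → s.held w ≠ none

lemma card_freeWomen (hs : P.Invariant s) : (freeWomen s).card = (unmatched s).card := by
  have hheld : (freeWomen s)ᶜ.card = (unmatched s)ᶜ.card := by
    refine Finset.card_nbij (fun w => (s.held w).getD w) ?_ ?_ ?_
    · intro w hw
      obtain ⟨m, hm⟩ := Option.ne_none_iff_exists'.1 (by simpa [mem_freeWomen] using hw)
      simpa [mem_unmatched, hm] using ⟨w, hm⟩
    · intro w hw w' hw' h
      obtain ⟨m, hm⟩ := Option.ne_none_iff_exists'.1 (by simpa [mem_freeWomen] using hw)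
      obtain ⟨m', hm'⟩ := Option.ne_none_iff_exists'.1 (by simpa [mem_freeWomen] using hw')
      simp only [hm, hm', Option.getD_some] at h
      exact hs.held_injective w w' m hm (h ▸ hm')
    · intro m hm
      obtain ⟨w, hw⟩ : ∃ w, s.held w = some m := by simpa [mem_unmatched] using hm
      exact ⟨w, by simp [mem_freeWomen, hw], by simp [hw]⟩
  have h₁ := Finset.card_le_univ (freeWomen s)
  have h₂ := Finset.card_le_univ (unmatched s)
  rw [Finset.card_compl, Finset.card_compl] at hheld
  omega

lemma next_lt_of_mem_unmatched (hs : P.Invariant s) {m : Fin n} (hm : m ∈ unmatched s) :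
    s.next m < n := by
  by_contra! hn
  have hfree : freeWomen s = ∅ := Finset.eq_empty_of_forall_notMem fun w hw =>
    hs.held_ne_none_of_proposed m w ((((P.mpref m).symm w).isLt).trans_le hn) (mem_freeWomen.1 hw)
  have := card_freeWomen hs
  rw [hfree, Finset.card_empty] at this
  exact Finset.card_ne_zero_of_mem hm this.symm

lemma invariant_step (hs : P.Invariant s) : P.Invariant (step P s) where
  held_injective w w' m h h' := by
    rcases mem_of_held_step h with hp | hp <;> rcases mem_of_held_step h' with hp' | hp'
    · exact (mem_proposers.1 hp).2.symm.trans (mem_proposers.1 hp').2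
    · exact absurd hp' (mem_unmatched.1 (mem_proposers.1 hp).1 w')
    · exact absurd hp (mem_unmatched.1 (mem_proposers.1 hp').1 w)
    · exact hs.held_injective w w' m hp hp'
  held_ne_none_of_proposed m w hrank hfree := by
    rw [held_step_eq_none_iff] at hfree
    by_cases hm : m ∈ unmatched s
    · simp only [step, hm, if_true] at hrank
      rcases Nat.lt_succ_iff_lt_or_eq.1 hrank with hlt | heq
      · exact hs.held_ne_none_of_proposed m w hlt hfree.2
      · have htarget : target P s m = w := by
          rw [target, ← Equiv.apply_symm_apply (P.mpref m) w]
          congr 1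
          ext
          simpa [← heq, mrank] using Nat.mod_eq_of_lt (next_lt_of_mem_unmatched hs hm)
        exact Finset.notMem_empty m (hfree.1 ▸ mem_proposers.2 ⟨hm, htarget⟩)
    · simp only [step, hm, if_false] at hrank
      exact hs.held_ne_none_of_proposed m w hrank hfree.2

variable (P) in
lemma invariant_stateAt (k : ℕ) : P.Invariant (stateAt P k) := by
  induction k with
  | zero => exact ⟨by simp [stateAt, initState], by simp [stateAt, initState]⟩
  | succ k ih =>
    rw [stateAt, Function.iterate_succ_apply']
    exact invariant_step ih

end Profile

lemma Nat.lt_card_filter_range_iff {p : ℕ → Prop} [DecidablePred p]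
    (hp : ∀ ⦃i j⦄, i ≤ j → p j → p i) {N k : ℕ} (hk : k < N) :
    k < ((Finset.range N).filter p).card ↔ p k := by
  constructor
  · intro hcard
    by_contra hpk
    have hsub : (Finset.range N).filter p ⊆ Finset.range k := fun j hj => by
      rw [Finset.mem_filter] at hj
      exact Finset.mem_range.2 (not_le.1 fun hkj => hpk (hp hkj hj.2))
    simpa using hcard.trans_le (Finset.card_le_card hsub)
  · intro hpk
    have hsub : Finset.range (k + 1) ⊆ (Finset.range N).filter p := fun j hj => by
      rw [Finset.mem_range] at hj
      exact Finset.mem_filter.2 ⟨Finset.mem_range.2 (by omega), hp (by omega) hpk⟩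
    simpa using Finset.card_le_card hsub

lemma Nat.add_le_sum_range_succ {f : ℕ → ℕ} {j : ℕ} (h : ∀ k < j, 0 < f (k + 1)) :
    f 0 + j ≤ ∑ k ∈ Finset.range (j + 1), f k := by
  rw [Finset.sum_range_succ', add_comm]
  gcongr
  simpa using Finset.card_nsmul_le_sum (Finset.range j) _ (1 : ℕ) fun k hk =>
    h k (Finset.mem_range.1 hk)

namespace Profile

variable {n : ℕ} (P : Profile n)

def numProposing (k : ℕ) : ℕ := (unmatched (stateAt P k)).card

lemma stateAt_succ (k : ℕ) : stateAt P (k + 1) = step P (stateAt P k) :=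
  Function.iterate_succ_apply' _ _ _

lemma numProposing_zero : P.numProposing 0 = n := by
  simp [numProposing, stateAt, initState, unmatched]

lemma numProposing_eq_card_freeWomen (k : ℕ) :
    P.numProposing k = (freeWomen (stateAt P k)).card :=
  (card_freeWomen (invariant_stateAt P k)).symm

lemma freeWomen_step_subset (s : DAState n) : freeWomen (step P s) ⊆ freeWomen s :=
  fun _ hw => mem_freeWomen.2 (held_step_eq_none_iff.1 (mem_freeWomen.1 hw)).2

lemma numProposing_antitone : Antitone P.numProposing := by
  refine antitone_nat_of_succ_le fun k => ?_
  simp only [numProposing_eq_card_freeWomen, stateAt_succ]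
  exact Finset.card_le_card (freeWomen_step_subset P _)

lemma numProposing_one :
    P.numProposing 1 = (Finset.univ.filter fun w => ∀ m, P.topM m ≠ w).card := by
  rw [numProposing_eq_card_freeWomen, stateAt_succ]
  congr 1
  ext w
  have htarget (m : Fin n) : target P (initState n) m = P.topM m :=
    congrArg (P.mpref m) (Fin.ext (Nat.zero_mod n))
  have hunmatched (m : Fin n) : m ∈ unmatched (initState n) := by
    simp [mem_unmatched, initState]
  have hheld : (initState n).held w = none := rfl
  simp [mem_freeWomen, held_step_eq_none_iff, Finset.eq_empty_iff_forall_notMem, mem_proposers,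
    htarget, hunmatched, hheld, stateAt]

lemma sum_next_step (s : DAState n) :
    ∑ m, (step P s).next m = ∑ m, s.next m + (unmatched s).card := by
  calc ∑ m, (step P s).next m = ∑ m, (s.next m + if m ∈ unmatched s then 1 else 0) :=
        Finset.sum_congr rfl fun m _ => by by_cases hm : m ∈ unmatched s <;> simp [step, hm]
    _ = ∑ m, s.next m + (unmatched s).card := by simp [Finset.sum_add_distrib]

lemma sum_next_stateAt (k : ℕ) :
    ∑ m, (stateAt P k).next m = ∑ j ∈ Finset.range k, P.numProposing j := by
  induction k with
  | zero => simp [stateAt, initState]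
  | succ k ih => rw [Finset.sum_range_succ, ← ih, stateAt_succ, sum_next_step, numProposing]

lemma rounds_le : P.rounds ≤ n * n + 1 :=
  (Finset.card_filter_le _ _).trans_eq (Finset.card_range _)

lemma numProposing_pos_iff {k : ℕ} (hk : k < n * n + 1) :
    0 < P.numProposing k ↔ k < P.rounds := by
  rw [rounds, Nat.lt_card_filter_range_iff _ hk, numProposing, Finset.card_pos]
  intro i j hij hj
  rw [← Finset.card_pos] at hj ⊢
  exact hj.trans_le (P.numProposing_antitone hij)

lemma totalProposals_eq_sum :
    P.totalProposals = ∑ k ∈ Finset.range P.rounds, P.numProposing k := by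
  rw [totalProposals, finalState, sum_next_stateAt,
    ← Finset.sum_range_add_sum_Ico _ P.rounds_le, add_eq_left]
  refine Finset.sum_eq_zero fun k hk => ?_
  obtain ⟨hrk, hk⟩ := Finset.mem_Ico.1 hk
  by_contra h
  exact hrk.not_gt ((P.numProposing_pos_iff hk).1 (Nat.pos_of_ne_zero h))

lemma sum_numProposing_le_sum_mrank {k : ℕ} {w : Fin n} (hw : w ∈ freeWomen (stateAt P k)) :
    ∑ j ∈ Finset.range k, P.numProposing j ≤ ∑ m, P.mrank m w := by
  rw [← sum_next_stateAt]
  refine Finset.sum_le_sum fun m _ => not_lt.1 fun h => ?_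
  exact (invariant_stateAt P k).held_ne_none_of_proposed m w h (mem_freeWomen.1 hw)

lemma mrank_lt (m w : Fin n) : P.mrank m w < n := ((P.mpref m).symm w).isLt

lemma mrank_topM (m : Fin n) : P.mrank m (P.topM m) = 0 := by simp [mrank, topM]

lemma mrank_injective (m : Fin n) : Function.Injective (P.mrank m) :=
  fun _ _ h => (P.mpref m).symm.injective (Fin.ext h)

lemma sum_mrank_le (w : Fin n) : ∑ m, P.mrank m w ≤ n * (n - 1) := by
  simpa using Finset.sum_le_card_nsmul Finset.univ _ (n - 1) fun m _ =>
    Nat.le_pred_of_lt (P.mrank_lt m w)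

lemma mrank_eq_pred_of_le_sum_mrank {w : Fin n} (h : n * (n - 1) ≤ ∑ m, P.mrank m w)
    (m : Fin n) : P.mrank m w = n - 1 := by
  have hle : ∀ m ∈ Finset.univ, P.mrank m w ≤ n - 1 := fun m _ =>
    Nat.le_pred_of_lt (P.mrank_lt m w)
  have hsum : ∑ m, P.mrank m w = ∑ _m : Fin n, (n - 1) := by
    simpa using le_antisymm (P.sum_mrank_le w) h
  exact (Finset.sum_eq_sum_iff_of_le hle).1 hsum m (Finset.mem_univ m)

lemma mPrefers_of_mrank_eq_pred {m w w' : Fin n} (h : P.mrank m w = n - 1) (hw' : w' ≠ w) :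
    P.mPrefers m w' w := by
  have hlt := P.mrank_lt m w'
  have hne : P.mrank m w' ≠ P.mrank m w := fun h' => hw' (P.mrank_injective m h')
  unfold mPrefers
  omega

lemma topM_ne_of_mrank_eq_pred (hn : 2 ≤ n) {m w : Fin n} (h : P.mrank m w = n - 1) :
    P.topM m ≠ w := by
  rintro rfl
  have := P.mrank_topM m
  omega

lemma numProposing_one_le_one {wn : Fin n} (htop : ∀ w ≠ wn, ∃ m, P.topM m = w) :
    P.numProposing 1 ≤ 1 := by
  rw [numProposing_one]
  refine (Finset.card_le_card fun w hw => ?_).trans (Finset.card_singleton wn).le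
  rw [Finset.mem_singleton]
  by_contra hne
  obtain ⟨m, hm⟩ := htop w hne
  exact (Finset.mem_filter.1 hw).2 m hm

lemma exists_topM_of_numProposing_one_le_one (h : P.numProposing 1 ≤ 1) {wn : Fin n}
    (hwn : ∀ m, P.topM m ≠ wn) {w : Fin n} (hw : w ≠ wn) : ∃ m, P.topM m = w := by
  by_contra! hnot
  rw [numProposing_one, Finset.card_le_one] at h
  exact hw (h w (by simpa using hnot) wn (by simpa using hwn))

lemma numProposing_pos {k : ℕ} (hk : k < P.rounds) : 0 < P.numProposing k :=
  (P.numProposing_pos_iff (hk.trans_le P.rounds_le)).2 hk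

lemma exists_freeWomen_eq_singleton {k : ℕ} (hk : k < P.rounds)
    (hsum : n * (n - 1) ≤ ∑ j ∈ Finset.range k, P.numProposing j) :
    ∃ wn, freeWomen (stateAt P k) = {wn} ∧ ∀ m, P.mrank m wn = n - 1 := by
  have hlast : ∀ w ∈ freeWomen (stateAt P k), ∀ m, P.mrank m w = n - 1 := fun w hw =>
    P.mrank_eq_pred_of_le_sum_mrank (hsum.trans (P.sum_numProposing_le_sum_mrank hw))
  have hcard : (freeWomen (stateAt P k)).card = 1 := by
    have hpos := P.numProposing_pos hk
    rw [numProposing_eq_card_freeWomen] at hpos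
    obtain ⟨w₀, -⟩ := Finset.card_pos.1 hpos
    refine le_antisymm (Finset.card_le_one.2 fun w hw w' hw' => ?_) hpos
    exact P.mrank_injective ⟨0, w₀.pos⟩ ((hlast w hw _).trans (hlast w' hw' _).symm)
  obtain ⟨wn, hwn⟩ := Finset.card_eq_one.1 hcard
  exact ⟨wn, hwn, hlast wn (hwn ▸ Finset.mem_singleton_self wn)⟩

lemma pos_of_maxRou (hR : P.MaxRou) : 0 < n := by
  have hr := P.rounds_le
  unfold MaxRou at hR
  rcases n with _ | n
  · simp at hR hr
    omega
  · exact n.succ_pos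

lemma maxProp_of_maxRou_of_le_one (hn : n ≤ 1) (hR : P.MaxRou) : P.MaxProp := by
  obtain rfl : n = 1 := by
    have := P.pos_of_maxRou hR
    omega
  simp_all [MaxRou, MaxProp, totalProposals_eq_sum, numProposing_zero]

lemma maxProp_and_exists_last_of_maxRou (hn : 2 ≤ n) (hR : P.MaxRou) :
    P.MaxProp ∧ ∃ wn, (∀ m, P.mrank m wn = n - 1) ∧ ∀ w ≠ wn, ∃ m, P.topM m = w := by
  have h2n : 2 * n ≤ n * n := Nat.mul_le_mul_right n hn
  have hnn : n * (n - 1) + n = n * n := by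
    rw [← Nat.mul_add_one, Nat.sub_add_cancel (by omega)]
  obtain ⟨j, hj, hrj⟩ : ∃ j, j + n = n * (n - 1) ∧ P.rounds = j + 2 :=
    ⟨n * n - 2 * n, by omega, by unfold MaxRou at hR; omega⟩
  have hsum_ge : n * (n - 1) ≤ ∑ k ∈ Finset.range (j + 1), P.numProposing k := by
    have := Nat.add_le_sum_range_succ (f := P.numProposing) (j := j) fun k hk =>
      P.numProposing_pos (by omega)
    rw [numProposing_zero] at this
    omega
  obtain ⟨wn, hfree, hlast⟩ := P.exists_freeWomen_eq_singleton (k := j + 1) (by omega) hsum_ge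
  have htotal_le : P.totalProposals ≤ n * (n - 1) + 1 := by
    rw [totalProposals_eq_sum, hrj, Finset.sum_range_succ, numProposing_eq_card_freeWomen,
      hfree, Finset.card_singleton]
    gcongr
    exact (P.sum_numProposing_le_sum_mrank (hfree ▸ Finset.mem_singleton_self wn)).trans
      (P.sum_mrank_le wn)
  have htotal_ge : n + (P.numProposing 1 + j) ≤ P.totalProposals := by
    rw [totalProposals_eq_sum, hrj, Finset.sum_range_succ', numProposing_zero, add_comm n]
    gcongr
    exact Nat.add_le_sum_range_succ (f := fun k => P.numProposing (k + 1)) fun k hk =>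
      P.numProposing_pos (by omega)
  have hone : P.numProposing 1 ≤ 1 := by omega
  have hone_pos := P.numProposing_pos (k := 1) (by omega)
  refine ⟨by unfold MaxProp; omega, wn, hlast, fun w hw => ?_⟩
  exact P.exists_topM_of_numProposing_one_le_one hone
    (fun m => P.topM_ne_of_mrank_eq_pred hn (hlast m)) hw

lemma maxRou_of_maxProp (hP : P.MaxProp) {wn : Fin n} (htop : ∀ w ≠ wn, ∃ m, P.topM m = w) :
    P.MaxRou := by
  have hn : 0 < n := wn.pos
  have hone := P.numProposing_one_le_one htop
  obtain ⟨j, hrj⟩ : ∃ j, P.rounds = j + 1 := by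
    have := (P.numProposing_pos_iff (by omega)).1 (P.numProposing_zero ▸ hn)
    exact ⟨P.rounds - 1, by omega⟩
  have hT : P.totalProposals = j + n := by
    rw [totalProposals_eq_sum, hrj, Finset.sum_range_succ', numProposing_zero]
    congr 1
    calc ∑ k ∈ Finset.range j, P.numProposing (k + 1) = ∑ _k ∈ Finset.range j, 1 :=
          Finset.sum_congr rfl fun k hk => le_antisymm
            ((P.numProposing_antitone (by omega : 1 ≤ k + 1)).trans hone)
            (P.numProposing_pos (by rw [Finset.mem_range] at hk; omega))
      _ = j := by simp
  have hsq : 2 * n ≤ n * n + 1 := by nlinarith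
  unfold MaxRou
  unfold MaxProp at hP
  omega

end Profile

/-- Characterization of MaxRou: a profile satisfies MaxRou iff it satisfies
MaxProp with a woman `wn` who is every man's least preferred woman, and every
other woman is the top preference of some man. -/
theorem maxRou_characterization (n : ℕ) (P : Profile n) :
    P.MaxRou ↔
    (P.MaxProp ∧ ∃ wn : Fin n,
      (∀ m w : Fin n, w ≠ wn → P.mPrefers m w wn) ∧
      (∀ w : Fin n, w ≠ wn → ∃ m : Fin n, P.topM m = w)) := by
  refine ⟨fun hR => ?_, fun ⟨hP, _, _, htop⟩ => P.maxRou_of_maxProp hP htop⟩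
  rcases Nat.lt_or_ge n 2 with hn | hn
  · have hn₀ := P.pos_of_maxRou hR
    have hsub (w : Fin n) : w = ⟨0, hn₀⟩ := Fin.ext (by omega)
    exact ⟨P.maxProp_of_maxRou_of_le_one (by omega) hR, ⟨0, hn₀⟩,
      fun _ w hw => absurd (hsub w) hw, fun w hw => absurd (hsub w) hw⟩
  · obtain ⟨hP, wn, hlast, htop⟩ := P.maxProp_and_exists_last_of_maxRou hn hR
    exact ⟨hP, wn, fun m w hw => P.mPrefers_of_mrank_eq_pred (hlast m) hw, htop⟩
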